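/- arXiv:2103.08015 — 3 statements merged into one kernel-verified Lean document; each statement's English description precedes it below -/
import Mathlib

section
/- For every integer n ≥ 1 and every real x, F_{2n}(x) − x·F_{2n-2}(x) = x·T_{n-1}(x) + (x²−2x+2)·Σ_{k=1}^{n-1} T_{n-1-k}(x)·F_{2k}(x). -/
/-- Chebyshev polynomials of the first kind. -/
def T : ℕ → ℝ → ℝ
  | 0, _ => 1
  | 1, x => x
  | (n+2), x => 2*x*T (n+1) x - T n x

/-- Chebyshev polynomials of the second kind. -/
def U : ℕ → ℝ → ℝ
  | 0, _ => 1
  | 1, x => 2*x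
  | (n+2), x => 2*x*U (n+1) x - U n x

/-- Fibonacci polynomials. -/
def F : ℕ → ℝ → ℝ
  | 0, _ => 0
  | 1, _ => 1
  | (n+2), x => x*F (n+1) x + F n x

/-- Balancing polynomials. -/
def B : ℕ → ℝ → ℝ
  | 0, _ => 0
  | 1, _ => 1
  | (n+2), x => 6*x*B (n+1) x - B n x

/-- Lucas-balancing polynomials. -/
def C : ℕ → ℝ → ℝ
  | 0, _ => 1
  | 1, x => 3*x
  | (n+2), x => 6*x*C (n+1) x - C n x

/-- Lucas numbers. -/
def lucas : ℕ → ℤ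
  | 0 => 2
  | 1 => 1
  | (n+2) => lucas (n+1) + lucas n

/-! Write `G m = F (2m) x`, so that `G (m+2) = (x²+2) G (m+1) - G m`. The convolution
`c m = ∑_{k=1}^m T_{m-k} a_k` of any sequence `a` with the Chebyshev polynomials satisfies
`c (m+2) = 2x c (m+1) - c m + a (m+2) - x a (m+1)`, so the right-hand side `R m` of the identity obeys
`R (m+2) = 2x R (m+1) - R m + (x²-2x+2) (G (m+2) - x G (m+1))`. Eliminating `G (m+3)` and `G m` with
the recurrence of `G` shows that the left-hand side `G (m+1) - x G m` obeys the same relation, and both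
sides agree for `m = 0, 1`. -/

theorem F_add_four (j : ℕ) (x : ℝ) : F (j + 4) x = (x ^ 2 + 2) * F (j + 2) x - F j x := by
  simp only [F]
  ring

theorem T_add_two (m : ℕ) (x : ℝ) : T (m + 2) x = 2 * x * T (m + 1) x - T m x := rfl

theorem sum_Icc_T_mul_add_two (a : ℕ → ℝ) (m : ℕ) (x : ℝ) :
    ∑ k ∈ Finset.Icc 1 (m + 2), T (m + 2 - k) x * a k =
      2 * x * ∑ k ∈ Finset.Icc 1 (m + 1), T (m + 1 - k) x * a k
        - ∑ k ∈ Finset.Icc 1 m, T (m - k) x * a k + a (m + 2) - x * a (m + 1) := by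
  have hrec : ∑ k ∈ Finset.Icc 1 m, T (m + 2 - k) x * a k =
      2 * x * ∑ k ∈ Finset.Icc 1 m, T (m + 1 - k) x * a k
        - ∑ k ∈ Finset.Icc 1 m, T (m - k) x * a k := by
    rw [Finset.mul_sum, ← Finset.sum_sub_distrib]
    refine Finset.sum_congr rfl fun k hk => ?_
    rw [show m + 2 - k = m - k + 2 by grind, show m + 1 - k = m - k + 1 by grind, T_add_two]
    ring
  rw [Finset.sum_Icc_succ_top (by omega : 1 ≤ m + 2), Finset.sum_Icc_succ_top (by omega : 1 ≤ m + 1),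
    Finset.sum_Icc_succ_top (by omega : 1 ≤ m + 1), hrec]
  simp only [Nat.sub_self, show m + 2 - (m + 1) = 1 by omega, T]
  ring

theorem F_two_mul_add_two_sub_mul (m : ℕ) (x : ℝ) :
    F (2 * m + 2) x - x * F (2 * m) x =
      x * T m x + (x ^ 2 - 2 * x + 2) * ∑ k ∈ Finset.Icc 1 m, T (m - k) x * F (2 * k) x := by
  induction m using Nat.twoStepInduction with
  | zero => simp [F, T]
  | one => norm_num [F, T]; ring
  | more m ih₀ ih₁ =>
    have hF₀ := F_add_four (2 * m) x
    have hF₁ := F_add_four (2 * m + 2) x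
    rw [sum_Icc_T_mul_add_two (fun k => F (2 * k) x), T_add_two]
    ring_nf at ih₀ ih₁ hF₀ hF₁ ⊢
    linear_combination 2 * x * ih₁ - ih₀ + hF₁ - x * hF₀

theorem stmt11 (n : ℕ) (hn : 1 ≤ n) (x : ℝ) :
    F (2*n) x - x * F (2*n-2) x =
      x * T (n-1) x + (x^2 - 2*x + 2) * ∑ k ∈ Finset.Icc 1 (n-1), T (n-1-k) x * F (2*k) x := by
  obtain ⟨m, rfl⟩ : ∃ m, n = m + 1 := ⟨n - 1, by omega⟩
  simpa [mul_add] using F_two_mul_add_two_sub_mul m x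
end

section
/- For every integer n ≥ 1 and every real x, F_n(3x) = C_{n-1}(x) − Σ_{k=1}^{n-2} (3x·C_{n-k-1}(x) − 2·C_{n-k-2}(x))·F_k(3x), where C_m(x) denotes the Lucas-balancing polynomials. -/
/-! With `y = 3x`, the coefficients `a_j = y C_j - 2 C_{j-1}` obey the Lucas-balancing recurrence
`a_{j+2} = 2y a_{j+1} - a_j` for `j ≥ 1`. Hence the convolution `S_m = ∑_{k<m} a_{m-k} F_k(y)`
satisfies the same recurrence up to two boundary terms, and `C_m - S_m` is seen to obey the
Fibonacci recurrence by two-step induction. -/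

open Finset

variable (x : ℝ)

lemma C_add_two (n : ℕ) : C (n + 2) x = 6 * x * C (n + 1) x - C n x := rfl

lemma F_zero : F 0 x = 0 := rfl

lemma F_add_two (n : ℕ) : F (n + 2) x = x * F (n + 1) x + F n x := rfl

def lbCoeff (j : ℕ) : ℝ := 3 * x * C j x - 2 * C (j - 1) x

lemma lbCoeff_add_three (j : ℕ) :
    lbCoeff x (j + 3) = 6 * x * lbCoeff x (j + 2) - lbCoeff x (j + 1) := by
  simp only [lbCoeff, Nat.add_sub_cancel, show j + 3 - 1 = j + 2 by omega,
    show j + 2 - 1 = j + 1 by omega, C_add_two]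
  ring

lemma lbCoeff_one : lbCoeff x 1 = 9 * x ^ 2 - 2 := by
  simp only [lbCoeff, C, tsub_self, mul_one, sub_left_inj]; ring

lemma lbCoeff_two : lbCoeff x 2 = 6 * x * lbCoeff x 1 + 3 * x := by
  simp only [lbCoeff, C, Nat.add_one_sub_one, tsub_self, mul_one]; ring

/-- The sum of the theorem for `n = m + 1`, over `range m`: its extra term `k = 0` vanishes. -/
def convSum (m : ℕ) : ℝ := ∑ k ∈ range m, lbCoeff x (m - k) * F k (3 * x)

lemma convSum_add_two (m : ℕ) :
    convSum x (m + 2) = 6 * x * convSum x (m + 1) - convSum x m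
      + 3 * x * F m (3 * x) + lbCoeff x 1 * F (m + 1) (3 * x) := by
  have shift : ∀ k ∈ range m, lbCoeff x (m + 2 - k) * F k (3 * x)
      = 6 * x * (lbCoeff x (m + 1 - k) * F k (3 * x)) - lbCoeff x (m - k) * F k (3 * x) := by
    intro k hk
    obtain ⟨j, rfl⟩ : ∃ j, m = k + j + 1 := ⟨m - k - 1, by have := mem_range.mp hk; omega⟩
    rw [show k + j + 1 + 2 - k = j + 3 by omega, show k + j + 1 + 1 - k = j + 2 by omega,
      show k + j + 1 - k = j + 1 by omega, lbCoeff_add_three]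
    ring
  simp only [convSum, sum_range_succ, sum_congr rfl shift, sum_sub_distrib, ← mul_sum,
    Nat.add_sub_cancel_left, show m + 2 - (m + 1) = 1 by omega, lbCoeff_two]
  ring

lemma F_succ_eq_C_sub_convSum (m : ℕ) : F (m + 1) (3 * x) = C m x - convSum x m := by
  induction m using Nat.twoStepInduction with
  | zero => simp [F, C, convSum]
  | one => simp [F, C, convSum]
  | more m ih₀ ih₁ =>
    rw [F_add_two, C_add_two, convSum_add_two, lbCoeff_one]
    linear_combination 6 * x * ih₁ - ih₀ - 3 * x * F_add_two (3 * x) m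

lemma sum_Icc_one_pred_eq_convSum (m : ℕ) :
    ∑ k ∈ Icc 1 (m - 1), lbCoeff x (m - k) * F k (3 * x) = convSum x m := by
  rcases m with _ | m
  · rfl
  · rw [convSum, range_eq_Ico, sum_eq_sum_Ico_succ_bot m.succ_pos, F_zero, mul_zero, zero_add]
    rfl

theorem stmt12 (n : ℕ) (hn : 1 ≤ n) (x : ℝ) :
    F n (3*x) = C (n-1) x - ∑ k ∈ Finset.Icc 1 (n-2), (3*x * C (n-k-1) x - 2 * C (n-k-2) x) * F k (3*x) := by
  obtain ⟨m, rfl⟩ : ∃ m, n = m + 1 := ⟨n - 1, by omega⟩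
  have hsum : ∑ k ∈ Icc 1 (m - 1), (3 * x * C (m + 1 - k - 1) x - 2 * C (m + 1 - k - 2) x)
      * F k (3 * x) = convSum x m := by
    rw [← sum_Icc_one_pred_eq_convSum]
    refine sum_congr rfl fun k _ => ?_
    rw [lbCoeff, show m + 1 - k - 1 = m - k by omega, show m + 1 - k - 2 = m - k - 1 by omega]
  rw [Nat.add_sub_cancel, show m + 1 - 2 = m - 1 by omega, hsum, F_succ_eq_C_sub_convSum]
end

section
/- For every integer n ≥ 0, 11·Σ_{k=0}^{n} L_{4k+2}·F_{6(n−k)+3} = 3·(F_{6n+9} − F_{6n+3}) − 2·(L_{4n+6} − L_{4n+2}), where F and L denote Fibonacci and Lucas numbers. -/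
/-!
`k ↦ L_{4k+2}` and `m ↦ F_{6m+3}` satisfy `x (m + 2) = q x (m + 1) - x m` with `q = 7` and `p = 18`
respectively. For any two such sequences `a`, `b`, multiplying the convolution `∑ a k b (n - k)`
by `p - q` telescopes to four boundary terms; with `p - q = 11` these are the right-hand side.
-/

open Finset

section CauchyProduct

variable {R : Type*} [CommRing R] (a b : ℕ → R) {p q : R}

def cauchyProduct (n : ℕ) : R := ∑ k ∈ range (n + 1), a k * b (n - k)

theorem cauchyProduct_add_two (hb : ∀ m, b (m + 2) = p * b (m + 1) - b m) (n : ℕ) :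
    cauchyProduct a b (n + 2) = p * cauchyProduct a b (n + 1) - cauchyProduct a b n
      + a (n + 2) * b 0 + a (n + 1) * (b 1 - p * b 0) := by
  have head : ∑ k ∈ range (n + 1), a k * b (n + 2 - k) =
      p * ∑ k ∈ range (n + 1), a k * b (n + 1 - k) - cauchyProduct a b n := by
    rw [cauchyProduct, mul_sum, ← sum_sub_distrib]
    refine sum_congr rfl fun k hk => ?_
    have hkn : k ≤ n := Nat.lt_succ_iff.mp (mem_range.mp hk)
    rw [show n + 2 - k = n - k + 2 by omega, show n + 1 - k = n - k + 1 by omega, hb]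
    ring
  rw [cauchyProduct, cauchyProduct, sum_range_succ _ (n + 2), sum_range_succ _ (n + 1),
    sum_range_succ _ (n + 1), head]
  simp only [Nat.sub_self, show n + 2 - (n + 1) = 1 by omega]
  ring

/-- `q * a 0 - a 1` and `p * b 0 - b 1` are the terms `a (-1)` and `b (-1)` obtained by running the
recurrences backwards. -/
theorem sub_mul_cauchyProduct (ha : ∀ k, a (k + 2) = q * a (k + 1) - a k)
    (hb : ∀ m, b (m + 2) = p * b (m + 1) - b m) (n : ℕ) :
    (p - q) * cauchyProduct a b n =
      a 0 * b (n + 1) - (q * a 0 - a 1) * b n - b 0 * a (n + 1) + (p * b 0 - b 1) * a n := by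
  induction n using Nat.twoStepInduction with
  | zero => simp only [cauchyProduct, zero_add, range_one, sum_singleton, Nat.sub_self]; ring
  | one =>
    simp only [cauchyProduct, sum_range_succ, range_one, sum_singleton, Nat.sub_self,
      Nat.sub_zero]
    rw [hb 0, ha 0]
    ring
  | more n ih₀ ih₁ =>
    rw [cauchyProduct_add_two a b hb, ha (n + 1), hb (n + 1)]
    linear_combination p * ih₁ - ih₀ + (b 1 - p * b 0) * ha n + (q * a 0 - a 1) * hb n

end CauchyProduct

theorem fib_add_twelve (m : ℕ) : (Nat.fib (m + 12) : ℤ) = 18 * Nat.fib (m + 6) - Nat.fib m := by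
  simp only [Nat.fib_add_two, Nat.cast_add]
  ring

theorem lucas_add_two (m : ℕ) : lucas (m + 2) = lucas (m + 1) + lucas m := rfl

theorem lucas_add_eight (m : ℕ) : lucas (m + 8) = 7 * lucas (m + 4) - lucas m := by
  simp only [lucas_add_two]
  ring

theorem stmt19 (n : ℕ) :
    11 * ∑ k ∈ Finset.range (n+1), lucas (4*k+2) * (Nat.fib (6*(n-k)+3) : ℤ) =
      3 * ((Nat.fib (6*n+9) : ℤ) - (Nat.fib (6*n+3) : ℤ)) - 2 * (lucas (4*n+6) - lucas (4*n+2)) := by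
  have ha (k : ℕ) : lucas (4 * (k + 2) + 2) = 7 * lucas (4 * (k + 1) + 2) - lucas (4 * k + 2) :=
    lucas_add_eight (4 * k + 2)
  have hb (m : ℕ) : (Nat.fib (6 * (m + 2) + 3) : ℤ) =
      18 * Nat.fib (6 * (m + 1) + 3) - Nat.fib (6 * m + 3) :=
    fib_add_twelve (6 * m + 3)
  have h := sub_mul_cauchyProduct (fun k => lucas (4 * k + 2))
    (fun m => (Nat.fib (6 * m + 3) : ℤ)) ha hb n
  norm_num [cauchyProduct, show lucas 2 = 3 from rfl, show lucas 6 = 18 from rfl] at h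
  rw [show 6 * (n + 1) + 3 = 6 * n + 9 by ring, show 4 * (n + 1) + 2 = 4 * n + 6 by ring] at h
  linear_combination h
end
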